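/- Fix a system of positive coset-depending weights w on an n-player game (n ≥ 2). For any tuple (i_1,…,i_n) with i_j ∈ S_j for each j, define the game c = (c_1,…,c_n) as follows, where 1{·} denotes the indicator: for 1 ≤ j ≤ n−1, c_j(x) = (1/w_j(x_{-j})) · (∏_{q=1}^{j−1} 1{x_q = i_q}) · (1{x_j = 1} − 1{x_j = i_j}) · (∏_{q=j+1}^{n−1} 1{x_q = 1}) · (1{x_n = 1} − 1{x_n = i_n}); and c_n(x) = −(1/w_n(x_{-n})) · (∏_{q=1}^{n−1} 1{x_q = 1} − ∏_{q=1}^{n−1} 1{x_q = i_q}) · (1{x_n = 1} − 1{x_n = i_n}). Then c is orthogonal (with respect to ⟨c,c'⟩ = Σ_i Σ_s c_i(s)c'_i(s)) to every coset weighted potential game with respect to w, i.e. c lies in the coset weighted pure harmonic subspace ℋ^{cw}. -/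
import Mathlib


/-- `f : S → ℝ` depends only on the strategies of the players other than `i`
(i.e. it is a function of `s_{-i}`). -/
def IndepOf {n : ℕ} {k : Fin n → ℕ} (i : Fin n) (f : (∀ j, Fin (k j)) → ℝ) : Prop :=
  ∀ (s : ∀ j, Fin (k j)) (x : Fin (k i)), f (Function.update s i x) = f s

/-- `P` is a coset weighted potential function for the game `c` with respect to the
coset-depending weights `w`. -/
def IsCWPotentialFn {n : ℕ} {k : Fin n → ℕ} (c w : Fin n → (∀ j, Fin (k j)) → ℝ)
    (P : (∀ j, Fin (k j)) → ℝ) : Prop :=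
  ∀ (i : Fin n) (s : ∀ j, Fin (k j)) (x y : Fin (k i)),
    c i (Function.update s i x) - c i (Function.update s i y)
      = w i s * (P (Function.update s i x) - P (Function.update s i y))

/-- `c` is a coset weighted potential game with respect to `w`. -/
def IsCWPG {n : ℕ} {k : Fin n → ℕ} (w c : Fin n → (∀ j, Fin (k j)) → ℝ) : Prop :=
  ∃ P, IsCWPotentialFn c w P

/-- The inner product `⟨c, c'⟩ = Σ_i Σ_s c_i(s) c'_i(s)` on the space of games. -/
noncomputable def gameInner {n : ℕ} {k : Fin n → ℕ}
    (c c' : Fin n → (∀ j, Fin (k j)) → ℝ) : ℝ :=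
  ∑ i : Fin n, ∑ s : ∀ j, Fin (k j), c i s * c' i s

/-- **Membership claim (3.19) of Lemma 3.3.** For any tuple `(i₁,…,i_n)` of strategies
(`idx`), the game `c` given (in `0`-indexed form, the paper's strategy `1` being
index `0` and the paper's player `n` being index `n−1`) by
`c_j(x) = (1/w_j(x_{-j})) (∏_{q<j} 1{x_q = i_q}) (1{x_j = 1} − 1{x_j = i_j})
          (∏_{j<q≤n−1} 1{x_q = 1}) (1{x_n = 1} − 1{x_n = i_n})` for `1 ≤ j ≤ n−1`, and
`c_n(x) = −(1/w_n(x_{-n})) (∏_{q≤n−1} 1{x_q = 1} − ∏_{q≤n−1} 1{x_q = i_q})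
          (1{x_n = 1} − 1{x_n = i_n})`,
is orthogonal to every coset weighted potential game w.r.t. `w`, i.e. it lies in the
coset weighted pure harmonic subspace `ℋ^{cw}`. -/
theorem harmonic_generator_orthogonal (n : ℕ) (hn : 2 ≤ n) (k : Fin n → ℕ)
    (hk : ∀ i, 2 ≤ k i) (w : Fin n → (∀ j, Fin (k j)) → ℝ)
    (hw : ∀ i s, 0 < w i s) (hwI : ∀ i, IndepOf i (w i))
    (idx : ∀ j, Fin (k j)) (c : Fin n → (∀ j, Fin (k j)) → ℝ)
    (hcj : ∀ j : Fin n, (j : ℕ) < n - 1 → ∀ x : ∀ q, Fin (k q),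
      c j x = (1 / w j x)
        * (∏ q ∈ Finset.univ.filter (fun q : Fin n => q < j),
            (if x q = idx q then (1 : ℝ) else 0))
        * ((if x j = (⟨0, by have := hk j; omega⟩ : Fin (k j)) then (1 : ℝ) else 0)
            - (if x j = idx j then 1 else 0))
        * (∏ q ∈ Finset.univ.filter (fun q : Fin n => j < q ∧ (q : ℕ) < n - 1),
            (if x q = (⟨0, by have := hk q; omega⟩ : Fin (k q)) then (1 : ℝ) else 0))
        * ((if x (⟨n - 1, by omega⟩ : Fin n)
              = (⟨0, by have := hk (⟨n - 1, by omega⟩ : Fin n); omega⟩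
                  : Fin (k (⟨n - 1, by omega⟩ : Fin n))) then (1 : ℝ) else 0)
            - (if x (⟨n - 1, by omega⟩ : Fin n) = idx (⟨n - 1, by omega⟩ : Fin n)
                then 1 else 0)))
    (hcn : ∀ x : ∀ q, Fin (k q),
      c (⟨n - 1, by omega⟩ : Fin n) x = -(1 / w (⟨n - 1, by omega⟩ : Fin n) x)
        * ((∏ q ∈ Finset.univ.filter (fun q : Fin n => (q : ℕ) < n - 1),
              (if x q = (⟨0, by have := hk q; omega⟩ : Fin (k q)) then (1 : ℝ) else 0))
            - (∏ q ∈ Finset.univ.filter (fun q : Fin n => (q : ℕ) < n - 1),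
              (if x q = idx q then (1 : ℝ) else 0)))
        * ((if x (⟨n - 1, by omega⟩ : Fin n)
              = (⟨0, by have := hk (⟨n - 1, by omega⟩ : Fin n); omega⟩
                  : Fin (k (⟨n - 1, by omega⟩ : Fin n))) then (1 : ℝ) else 0)
            - (if x (⟨n - 1, by omega⟩ : Fin n) = idx (⟨n - 1, by omega⟩ : Fin n)
                then 1 else 0))) :
    ∀ c' : Fin n → (∀ j, Fin (k j)) → ℝ, IsCWPG w c' → gameInner c c' = 0 := by

  classical
  intro c' hc'
  obtain ⟨P, hP⟩ := hc'
  have hk0 : ∀ q : Fin n, 0 < k q := fun q => by have := hk q; omega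
  set N : Fin n := ⟨n - 1, by omega⟩ with hN
  -- coset sums of c vanish
  have hA : ∀ (i : Fin n) (s : ∀ j, Fin (k j)),
      ∑ x : Fin (k i), c i (Function.update s i x) = 0 := by
    intro i s
    by_cases hi : (i : ℕ) < n - 1
    · have hNi : N ≠ i := by
        intro h; rw [Fin.ext_iff] at h; simp [hN] at h; omega
      have hform : ∀ x : Fin (k i), c i (Function.update s i x)
          = ((1 / w i s)
            * (∏ q ∈ Finset.univ.filter (fun q : Fin n => q < i),
                (if s q = idx q then (1:ℝ) else 0))
            * (∏ q ∈ Finset.univ.filter (fun q : Fin n => i < q ∧ (q:ℕ) < n - 1),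
                (if s q = (⟨0, hk0 q⟩ : Fin (k q)) then (1:ℝ) else 0))
            * ((if s N = (⟨0, hk0 N⟩ : Fin (k N)) then (1:ℝ) else 0)
                - (if s N = idx N then 1 else 0)))
            * ((if x = (⟨0, hk0 i⟩ : Fin (k i)) then (1:ℝ) else 0)
                - (if x = idx i then 1 else 0)) := by
        intro x
        have e1 : (∏ q ∈ Finset.univ.filter (fun q : Fin n => q < i),
              (if Function.update s i x q = idx q then (1:ℝ) else 0))
            = ∏ q ∈ Finset.univ.filter (fun q : Fin n => q < i),
              (if s q = idx q then (1:ℝ) else 0) :=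
          Finset.prod_congr rfl (fun q hq => by
            rw [Function.update_of_ne (ne_of_lt (Finset.mem_filter.mp hq).2)])
        have e2 : (∏ q ∈ Finset.univ.filter (fun q : Fin n => i < q ∧ (q:ℕ) < n - 1),
              (if Function.update s i x q = (⟨0, hk0 q⟩ : Fin (k q)) then (1:ℝ) else 0))
            = ∏ q ∈ Finset.univ.filter (fun q : Fin n => i < q ∧ (q:ℕ) < n - 1),
              (if s q = (⟨0, hk0 q⟩ : Fin (k q)) then (1:ℝ) else 0) :=
          Finset.prod_congr rfl (fun q hq => by
            rw [Function.update_of_ne (ne_of_gt (Finset.mem_filter.mp hq).2.1)])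
        rw [hcj i hi, hwI i s x, Function.update_self, e1, e2, Function.update_of_ne hNi]
        ring
      rw [Finset.sum_congr rfl (fun x _ => hform x), ← Finset.mul_sum]
      rw [Finset.sum_sub_distrib,
        Finset.sum_ite_eq' Finset.univ (⟨0, hk0 i⟩ : Fin (k i)) (fun _ => (1:ℝ)),
        Finset.sum_ite_eq' Finset.univ (idx i) (fun _ => (1:ℝ))]
      simp
    · have hiN : i = N := by rw [hN, Fin.ext_iff]; have := i.isLt; simp; omega
      subst hiN
      have hform : ∀ x : Fin (k N), c N (Function.update s N x)
          = (-(1 / w N s)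
            * ((∏ q ∈ Finset.univ.filter (fun q : Fin n => (q:ℕ) < n - 1),
                (if s q = (⟨0, hk0 q⟩ : Fin (k q)) then (1:ℝ) else 0))
              - (∏ q ∈ Finset.univ.filter (fun q : Fin n => (q:ℕ) < n - 1),
                (if s q = idx q then (1:ℝ) else 0))))
            * ((if x = (⟨0, hk0 N⟩ : Fin (k N)) then (1:ℝ) else 0)
                - (if x = idx N then 1 else 0)) := by
        intro x
        have hne : ∀ q : Fin n, (q:ℕ) < n - 1 → q ≠ N := by
          intro q hq h
          rw [hN, Fin.ext_iff] at h; simp at h; omega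
        have e1 : (∏ q ∈ Finset.univ.filter (fun q : Fin n => (q:ℕ) < n - 1),
              (if Function.update s N x q = (⟨0, hk0 q⟩ : Fin (k q)) then (1:ℝ) else 0))
            = ∏ q ∈ Finset.univ.filter (fun q : Fin n => (q:ℕ) < n - 1),
              (if s q = (⟨0, hk0 q⟩ : Fin (k q)) then (1:ℝ) else 0) :=
          Finset.prod_congr rfl (fun q hq => by
            rw [Function.update_of_ne (hne q (Finset.mem_filter.mp hq).2)])
        have e2 : (∏ q ∈ Finset.univ.filter (fun q : Fin n => (q:ℕ) < n - 1),
              (if Function.update s N x q = idx q then (1:ℝ) else 0))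
            = ∏ q ∈ Finset.univ.filter (fun q : Fin n => (q:ℕ) < n - 1),
              (if s q = idx q then (1:ℝ) else 0) :=
          Finset.prod_congr rfl (fun q hq => by
            rw [Function.update_of_ne (hne q (Finset.mem_filter.mp hq).2)])
        rw [hcn, hwI N s x, Function.update_self, e1, e2]
      rw [Finset.sum_congr rfl (fun x _ => hform x), ← Finset.mul_sum]
      rw [Finset.sum_sub_distrib,
        Finset.sum_ite_eq' Finset.univ (⟨0, hk0 N⟩ : Fin (k N)) (fun _ => (1:ℝ)),
        Finset.sum_ite_eq' Finset.univ (idx N) (fun _ => (1:ℝ))]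
      simp

  -- pointwise weighted sum vanishes (telescoping)
  have hB : ∀ s : ∀ j, Fin (k j), ∑ i : Fin n, w i s * c i s = 0 := by
    intro s
    set F : ℕ → ℝ := fun m =>
      (∏ q ∈ Finset.univ.filter (fun q : Fin n => (q:ℕ) < m),
        (if s q = idx q then (1:ℝ) else 0))
      * (∏ q ∈ Finset.univ.filter (fun q : Fin n => m ≤ (q:ℕ) ∧ (q:ℕ) < n - 1),
        (if s q = (⟨0, hk0 q⟩ : Fin (k q)) then (1:ℝ) else 0)) with hF
    set G : ℕ → ℝ := fun m => if h : m < n then w ⟨m, h⟩ s * c ⟨m, h⟩ s else 0 with hG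
    have hsum : ∑ i : Fin n, w i s * c i s = ∑ m ∈ Finset.range n, G m := by
      rw [← Fin.sum_univ_eq_sum_range G n]
      exact Finset.sum_congr rfl (fun i _ => by simp [hG, i.isLt])
    have hmid : ∀ m, m < n - 1 → G m = (F m - F (m+1))
        * ((if s N = (⟨0, hk0 N⟩ : Fin (k N)) then (1:ℝ) else 0)
            - (if s N = idx N then 1 else 0)) := by
      intro m hm
      have hmn : m < n := by omega
      set j : Fin n := ⟨m, hmn⟩ with hj
      have e1 : Finset.univ.filter (fun q : Fin n => m ≤ (q:ℕ) ∧ (q:ℕ) < n - 1)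
          = insert j (Finset.univ.filter (fun q : Fin n => m < (q:ℕ) ∧ (q:ℕ) < n - 1)) := by
        ext q; simp [hj, Fin.ext_iff]; omega
      have e2 : Finset.univ.filter (fun q : Fin n => (q:ℕ) < m + 1)
          = insert j (Finset.univ.filter (fun q : Fin n => (q:ℕ) < m)) := by
        ext q; simp [hj, Fin.ext_iff]; omega
      have hnm1 : j ∉ Finset.univ.filter (fun q : Fin n => m < (q:ℕ) ∧ (q:ℕ) < n - 1) := by
        simp [hj]
      have hnm2 : j ∉ Finset.univ.filter (fun q : Fin n => (q:ℕ) < m) := by simp [hj]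
      have f1 : Finset.univ.filter (fun q : Fin n => q < j)
          = Finset.univ.filter (fun q : Fin n => (q:ℕ) < m) :=
        Finset.filter_congr (fun q _ => by simp [Fin.lt_def, hj])
      have f2 : Finset.univ.filter (fun q : Fin n => j < q ∧ (q:ℕ) < n - 1)
          = Finset.univ.filter (fun q : Fin n => m < (q:ℕ) ∧ (q:ℕ) < n - 1) :=
        Finset.filter_congr (fun q _ => by simp [Fin.lt_def, hj])
      have hwne : w j s ≠ 0 := (hw j s).ne'
      have hc : ∀ B M A D : ℝ, w j s * ((1 / w j s * B) * M * A * D) = B * M * A * D := by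
        intro B M A D; field_simp; try ring
      simp only [hG]
      rw [dif_pos hmn]
      rw [hcj j hm, f1, f2, hc]
      have e3 : Finset.univ.filter (fun q : Fin n => m + 1 ≤ (q:ℕ) ∧ (q:ℕ) < n - 1)
          = Finset.univ.filter (fun q : Fin n => m < (q:ℕ) ∧ (q:ℕ) < n - 1) := rfl
      simp only [hF]
      rw [e3, e1, e2, Finset.prod_insert hnm1, Finset.prod_insert hnm2]
      ring
    have hlast : G (n-1) = -(F 0 - F (n-1))
        * ((if s N = (⟨0, hk0 N⟩ : Fin (k N)) then (1:ℝ) else 0)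
            - (if s N = idx N then 1 else 0)) := by
      have hmn : n - 1 < n := by omega
      have hNj : (⟨n-1, hmn⟩ : Fin n) = N := by rw [hN]
      have g1 : Finset.univ.filter (fun q : Fin n => (q:ℕ) < 0) = ∅ := by
        ext q; simp
      have g2 : Finset.univ.filter (fun q : Fin n => 0 ≤ (q:ℕ) ∧ (q:ℕ) < n-1)
          = Finset.univ.filter (fun q : Fin n => (q:ℕ) < n-1) :=
        Finset.filter_congr (fun q _ => by simp)
      have g3 : Finset.univ.filter (fun q : Fin n => n-1 ≤ (q:ℕ) ∧ (q:ℕ) < n-1) = ∅ := by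
        ext q; simp; try omega
      have hwne : w N s ≠ 0 := (hw N s).ne'
      have hc : ∀ X D : ℝ, w N s * (-(1 / w N s) * X * D) = -(X * D) := by
        intro X D; field_simp; try ring
      simp only [hG]
      rw [dif_pos hmn, hNj, hcn, hc]
      simp only [hF]
      rw [g1, g2, g3, Finset.prod_empty, Finset.prod_empty]
      ring
    rw [hsum, show n = (n-1)+1 from by omega, Finset.sum_range_succ]
    rw [Finset.sum_congr rfl (fun m hm => hmid m (Finset.mem_range.mp hm)), hlast]
    rw [← Finset.sum_mul, Finset.sum_range_sub' F (n-1)]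
    ring

  -- the non-potential part of c' is independent of each player's own strategy
  have hd : ∀ (i : Fin n) (s : ∀ j, Fin (k j)) (x : Fin (k i)),
      c' i (Function.update s i x) - w i (Function.update s i x) * P (Function.update s i x)
        = c' i s - w i s * P s := by
    intro i s x
    have h1 := hP i s x (s i)
    rw [Function.update_eq_self] at h1
    rw [hwI i s x]
    linear_combination h1
  -- sums against functions independent of coordinate i vanish
  have hzero : ∀ (i : Fin n) (g : (∀ j, Fin (k j)) → ℝ),
      (∀ s x, g (Function.update s i x) = g s) →
      ∑ s : ∀ j, Fin (k j), c i s * g s = 0 := by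
    intro i g hg
    let e := Equiv.piSplitAt i (fun j => Fin (k j))
    have h1 : ∑ s : ∀ j, Fin (k j), c i s * g s
        = ∑ p : Fin (k i) × (∀ j : {j // j ≠ i}, Fin (k j)), c i (e.symm p) * g (e.symm p) :=
      (Equiv.sum_comp e.symm (fun s => c i s * g s)).symm
    rw [h1, Fintype.sum_prod_type_right]
    refine Finset.sum_eq_zero (fun t _ => ?_)
    have hbase : ∀ x : Fin (k i), e.symm (x, t) = Function.update (e.symm (⟨0, hk0 i⟩, t)) i x := by
      intro x; funext j
      rcases eq_or_ne j i with rfl | hj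
      · simp [e, Equiv.piSplitAt_symm_apply]
      · simp [e, Equiv.piSplitAt_symm_apply, hj, Function.update_of_ne hj]
    calc ∑ x : Fin (k i), c i (e.symm (x,t)) * g (e.symm (x,t))
        = ∑ x : Fin (k i), c i (Function.update (e.symm (⟨0, hk0 i⟩, t)) i x)
            * g (e.symm (⟨0, hk0 i⟩, t)) := by
          refine Finset.sum_congr rfl fun x _ => ?_
          rw [hbase x, hg]
      _ = (∑ x : Fin (k i), c i (Function.update (e.symm (⟨0, hk0 i⟩, t)) i x))
            * g (e.symm (⟨0, hk0 i⟩, t)) := by rw [Finset.sum_mul]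
      _ = 0 := by rw [hA]; ring
  unfold gameInner
  have split : ∀ i : Fin n, ∑ s : ∀ j, Fin (k j), c i s * c' i s
      = ∑ s : ∀ j, Fin (k j), c i s * (w i s * P s)
        + ∑ s : ∀ j, Fin (k j), c i s * (c' i s - w i s * P s) := by
    intro i
    rw [← Finset.sum_add_distrib]
    exact Finset.sum_congr rfl (fun s _ => by ring)
  rw [Finset.sum_congr rfl (fun i _ => split i), Finset.sum_add_distrib]
  have T2 : ∑ i : Fin n, ∑ s : ∀ j, Fin (k j), c i s * (c' i s - w i s * P s) = 0 :=
    Finset.sum_eq_zero (fun i _ => hzero i _ (fun s x => hd i s x))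
  have T1 : ∑ i : Fin n, ∑ s : ∀ j, Fin (k j), c i s * (w i s * P s) = 0 := by
    rw [Finset.sum_comm]
    refine Finset.sum_eq_zero (fun s _ => ?_)
    have h2 : ∑ i : Fin n, c i s * (w i s * P s) = (∑ i : Fin n, w i s * c i s) * P s := by
      rw [Finset.sum_mul]
      exact Finset.sum_congr rfl (fun i _ => by ring)
    rw [h2, hB s, zero_mul]
  rw [T1, T2, add_zero]
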